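/- arXiv:1907.04956 — 3 statements merged into one kernel-verified Lean document; each statement's English description precedes it below -/
import Mathlib

section
/- If Y and C are independent real-valued random variables, C has survival function H(t) = P(C > t) (continuous), δ = 1_{Y ≤ C}, and T = min(Y, C), then for any bounded measurable function g, E[(δ/H(T)) · g(T)] = E[g(Y)] (interpreting δ/H(T) as 0 when δ = 0). -/
/-! By independence the law of `(Y, C)` is the product of the marginals. Integrating out `C`
first, the inner integral of `1_{y ≤ c}` is `P(C ≥ y)`, which equals `H y` because a continuous
survival function leaves `C` without atoms; so the weight `1 / H(Y)` cancels wherever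
`H(Y) > 0`, i.e. almost surely. -/

open MeasureTheory ProbabilityTheory Filter Set

section SurvivalFunction

variable {α : Type*} [MeasurableSpace α] [LinearOrder α] [TopologicalSpace α]

theorem measureReal_Ici_eq_measureReal_Ioi_of_continuousWithinAt
    [OrderTopology α] [DenselyOrdered α] [NoMinOrder α]
    (ν : Measure α) [IsFiniteMeasure ν] {y : α}
    (hy : ContinuousWithinAt (fun t => ν.real (Ioi t)) (Iio y) y) :
    ν.real (Ici y) = ν.real (Ioi y) :=
  le_antisymm
    (ge_of_tendsto hy <| eventually_nhdsWithin_of_forall fun _ ht =>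
      measureReal_mono (Ici_subset_Ioi.2 ht))
    (measureReal_mono Ioi_subset_Ici_self)

variable {E : Type*} [NormedAddCommGroup E] [NormedSpace ℝ E] [CompleteSpace E]
  [OrderClosedTopology α] [SecondCountableTopology α] [OpensMeasurableSpace α]

theorem integral_prod_ite_le (ν₁ ν₂ : Measure α) [SFinite ν₁] [IsFiniteMeasure ν₂] {φ : α → E}
    (hφ : StronglyMeasurable φ) (hint : Integrable (fun y => ν₂.real (Ici y) • φ y) ν₁) :
    ∫ p, (if p.1 ≤ p.2 then φ p.1 else 0) ∂(ν₁.prod ν₂) = ∫ y, ν₂.real (Ici y) • φ y ∂ν₁ := by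
  have hsection : ∀ y, (fun c => if y ≤ c then φ y else 0) = (Ici y).indicator fun _ => φ y :=
    fun y => funext fun c => by simp only [indicator, mem_Ici]
  have hsection_norm : ∀ y, (fun c => ‖if y ≤ c then φ y else 0‖)
      = (Ici y).indicator fun _ => ‖φ y‖ :=
    fun y => funext fun c => by by_cases h : y ≤ c <;> simp [h]
  have hmeas : AEStronglyMeasurable (fun p : α × α => if p.1 ≤ p.2 then φ p.1 else 0)
      (ν₁.prod ν₂) :=
    ((hφ.comp_measurable measurable_fst).ite measurableSet_le' stronglyMeasurable_const)
      |>.aestronglyMeasurable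
  have hF : Integrable (fun p : α × α => if p.1 ≤ p.2 then φ p.1 else 0) (ν₁.prod ν₂) := by
    refine (integrable_prod_iff hmeas).2 ⟨ae_of_all _ fun y => ?_, ?_⟩
    · rw [hsection y]
      exact (integrable_const _).indicator measurableSet_Ici
    · refine hint.norm.congr (ae_of_all _ fun y => ?_)
      dsimp only
      rw [hsection_norm y, integral_indicator_const _ measurableSet_Ici, norm_smul,
        Real.norm_of_nonneg measureReal_nonneg, smul_eq_mul]
  rw [integral_prod _ hF]
  congr 1 with y
  rw [hsection y, integral_indicator_const _ measurableSet_Ici]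

end SurvivalFunction

/-- In the random censorship model: if `Y` and `C` are independent, `H t = P(C > t)` is
continuous, `δ = 1_{Y ≤ C}`, `T = min(Y, C)`, and `H(Y) > 0` a.s., then for any bounded
measurable `g`, `E[(δ/H(T)) g(T)] = E[g(Y)]` (the term being `0` when `δ = 0`). -/
theorem stmt0 {Ω : Type*} [MeasurableSpace Ω] (μ : Measure Ω) [IsProbabilityMeasure μ]
    (Y C : Ω → ℝ) (hY : Measurable Y) (hC : Measurable C)
    (hindep : IndepFun Y C μ)
    (H : ℝ → ℝ) (hH : ∀ t, H t = (μ {ω | t < C ω}).toReal)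
    (hHcont : Continuous H)
    (hpos : ∀ᵐ ω ∂μ, 0 < H (Y ω))
    (g : ℝ → ℝ) (hg : Measurable g) (M : ℝ) (hgb : ∀ t, |g t| ≤ M) :
    ∫ ω, (if Y ω ≤ C ω then g (min (Y ω) (C ω)) / H (min (Y ω) (C ω)) else 0) ∂μ
      = ∫ ω, g (Y ω) ∂μ := by
  set μY := μ.map Y
  set μC := μ.map C
  have hsurvival : (fun t => μC.real (Ioi t)) = H :=
    funext fun t => by rw [hH, map_measureReal_apply hC measurableSet_Ioi]; rfl
  have hIci : ∀ y, μC.real (Ici y) = H y := fun y => by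
    rw [measureReal_Ici_eq_measureReal_Ioi_of_continuousWithinAt μC
      (hsurvival ▸ hHcont.continuousWithinAt), ← hsurvival]
  have hcancel : ∀ᵐ y ∂μY, μC.real (Ici y) • (g y / H y) = g y := by
    filter_upwards [ae_map_iff hY.aemeasurable (measurableSet_lt measurable_const
      hHcont.measurable) |>.2 hpos] with y hy
    rw [hIci, smul_eq_mul, mul_div_cancel₀ _ hy.ne']
  have hgY : Integrable g μY := Integrable.of_bound hg.aestronglyMeasurable M (ae_of_all _ hgb)
  have hpair : μ.map (fun ω => (Y ω, C ω)) = μY.prod μC :=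
    (indepFun_iff_map_prod_eq_prod_map_map hY.aemeasurable hC.aemeasurable).1 hindep
  have hφ : Measurable fun y => g y / H y := hg.div hHcont.measurable
  have hF : Measurable fun p : ℝ × ℝ => if p.1 ≤ p.2 then g p.1 / H p.1 else 0 :=
    (hφ.comp measurable_fst).ite measurableSet_le' measurable_const
  calc _ = ∫ p, (if p.1 ≤ p.2 then g p.1 / H p.1 else 0) ∂(μY.prod μC) := by
        rw [← hpair, integral_map (hY.prodMk hC).aemeasurable hF.aestronglyMeasurable]
        congr with ω
        split_ifs with h
        · rw [min_eq_left h]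
        · rfl
    _ = ∫ y, μC.real (Ici y) • (g y / H y) ∂μY :=
        integral_prod_ite_le μY μC hφ.stronglyMeasurable
          (hgY.congr (hcancel.mono fun _ h => h.symm))
    _ = ∫ y, g y ∂μY := integral_congr_ae hcancel
    _ = ∫ ω, g (Y ω) ∂μ := integral_map hY.aemeasurable hg.aestronglyMeasurable
end

section
/- (Volkonskii–Rozanov) Let Z₁,…,Z_m be complex-valued random variables with |Z_j| ≤ 1, where Z_j is measurable with respect to F_{i_j}^{j_j} for indices 1 ≤ i₁ < j₁ < i₂ < j₂ < ⋯ < j_m ≤ n with gaps i_{l+1} − j_l ≥ k ≥ 1, in an α-mixing process with coefficient α(·). Then |E[∏_{j=1}^m Z_j] − ∏_{j=1}^m E[Z_j]| ≤ 16(m−1)α(k). -/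
/-
Let `𝓐`, `𝓑` be σ-algebras with `|P(A ∩ B) - P(A) P(B)| ≤ α` for `A ∈ 𝓐`, `B ∈ 𝓑`, and let `X`
be `𝓐`-measurable and `Y` be `𝓑`-measurable, real and bounded by `1`. Writing `h = E[Y | 𝓐] - E Y`
and `A = {h ≥ 0} ∈ 𝓐`, one has `|Cov(X, Y)| = |E[X h]| ≤ E|h| = 2 Cov(1_A, Y)`. Running the same
argument on the `𝓑` side replaces `Y` by an indicator `1_B`, so `|Cov(X, Y)| ≤ 4 α`; splitting
complex variables into real and imaginary parts costs another factor `4`. Finally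
`E ∏ Z - ∏ E Z = Cov(Z₁, Z₂ ⋯ Z_m) + E Z₁ (E ∏_{l ≥ 2} Z_l - ∏_{l ≥ 2} E Z_l)`, where `Z₂ ⋯ Z_m` is
measurable with respect to the future beyond the gap after `j₁`, and induction on `m` gives
`16 (m - 1) α(k)`.
-/

open MeasureTheory
open scoped ENNReal

namespace VolkonskiiRozanov

variable {Ω : Type*} {mΩ : MeasurableSpace Ω} {μ : Measure Ω}

noncomputable def cov {𝕜 : Type*} [RCLike 𝕜] (μ : Measure Ω) (X Y : Ω → 𝕜) : 𝕜 :=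
  (∫ ω, X ω * Y ω ∂μ) - (∫ ω, X ω ∂μ) * ∫ ω, Y ω ∂μ

/-- `α(𝓐, 𝓑) ≤ α` for the strong mixing coefficient `α(𝓐, 𝓑)` of two σ-algebras. -/
def AlphaMixingLE (μ : Measure Ω) (𝓐 𝓑 : MeasurableSpace Ω) (α : ℝ) : Prop :=
  ∀ A B, MeasurableSet[𝓐] A → MeasurableSet[𝓑] B → |μ.real (A ∩ B) - μ.real A * μ.real B| ≤ α

lemma cov_comm {𝕜 : Type*} [RCLike 𝕜] (X Y : Ω → 𝕜) : cov μ X Y = cov μ Y X := by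
  simp only [cov, mul_comm]

lemma cov_indicator_one {A B : Set Ω} (hA : MeasurableSet A) (hB : MeasurableSet B) :
    cov μ (A.indicator 1) (B.indicator (1 : Ω → ℝ)) = μ.real (A ∩ B) - μ.real A * μ.real B := by
  rw [cov, ← integral_indicator_one (hA.inter hB), Set.inter_indicator_one,
    integral_indicator_one hA, integral_indicator_one hB]
  rfl

lemma integrable_mul_of_memLp_top [IsFiniteMeasure μ] {𝕜 : Type*} [RCLike 𝕜] {f g : Ω → 𝕜}
    (hf : MemLp f ∞ μ) (hg : MemLp g ∞ μ) : Integrable (fun ω => f ω * g ω) μ :=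
  (hg.mul hf).integrable le_top

lemma re_integral {f : Ω → ℂ} (hf : Integrable f μ) : (∫ ω, f ω ∂μ).re = ∫ ω, (f ω).re ∂μ :=
  (integral_re hf).symm

lemma im_integral {f : Ω → ℂ} (hf : Integrable f μ) : (∫ ω, f ω ∂μ).im = ∫ ω, (f ω).im ∂μ :=
  (integral_im hf).symm

lemma re_cov [IsFiniteMeasure μ] {Z W : Ω → ℂ} (hZ : MemLp Z ∞ μ) (hW : MemLp W ∞ μ) :
    (cov μ Z W).re = cov μ (fun ω => (Z ω).re) (fun ω => (W ω).re)
      - cov μ (fun ω => (Z ω).im) (fun ω => (W ω).im) := by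
  have hrr : Integrable (fun ω => (Z ω).re * (W ω).re) μ :=
    integrable_mul_of_memLp_top hZ.re hW.re
  have hii : Integrable (fun ω => (Z ω).im * (W ω).im) μ :=
    integrable_mul_of_memLp_top hZ.im hW.im
  simp only [cov, Complex.sub_re, Complex.mul_re, re_integral (integrable_mul_of_memLp_top hZ hW),
    re_integral (hZ.integrable le_top), re_integral (hW.integrable le_top),
    im_integral (hZ.integrable le_top), im_integral (hW.integrable le_top), integral_sub hrr hii]
  ring

lemma im_cov [IsFiniteMeasure μ] {Z W : Ω → ℂ} (hZ : MemLp Z ∞ μ) (hW : MemLp W ∞ μ) :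
    (cov μ Z W).im = cov μ (fun ω => (Z ω).re) (fun ω => (W ω).im)
      + cov μ (fun ω => (Z ω).im) (fun ω => (W ω).re) := by
  have hri : Integrable (fun ω => (Z ω).re * (W ω).im) μ :=
    integrable_mul_of_memLp_top hZ.re hW.im
  have hir : Integrable (fun ω => (Z ω).im * (W ω).re) μ :=
    integrable_mul_of_memLp_top hZ.im hW.re
  simp only [cov, Complex.sub_im, Complex.mul_im, im_integral (integrable_mul_of_memLp_top hZ hW),
    re_integral (hZ.integrable le_top), re_integral (hW.integrable le_top),
    im_integral (hZ.integrable le_top), im_integral (hW.integrable le_top), integral_add hri hir]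
  ring

lemma norm_prod_le_one {ι α : Type*} [NormedCommRing α] [NormOneClass α] (s : Finset ι)
    {f : ι → α} (hf : ∀ i, ‖f i‖ ≤ 1) : ‖∏ i ∈ s, f i‖ ≤ 1 :=
  (Finset.norm_prod_le s f).trans (Finset.prod_le_one (fun _ _ => norm_nonneg _) fun i _ => hf i)

lemma end_add_le_start_of_lt {m k : ℕ} {i j : Fin m → ℕ} (hij : ∀ l, i l < j l)
    (hgap : ∀ l : Fin m, ∀ h : l.val + 1 < m, j l + k ≤ i ⟨l.val + 1, h⟩) {l l' : Fin m}
    (hll' : l < l') : j l + k ≤ i l' := by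
  obtain ⟨n, hn⟩ := l'
  induction n with
  | zero => exact absurd (Fin.lt_def.1 hll') (Nat.not_lt_zero _)
  | succ n ih =>
    have hn' : n < m := by omega
    rcases Nat.lt_succ_iff_lt_or_eq.1 (Fin.lt_def.1 hll') with hlt | heq
    · calc j l + k ≤ i ⟨n, hn'⟩ := ih hn' hlt
        _ ≤ j ⟨n, hn'⟩ + k := by have := hij ⟨n, hn'⟩; omega
        _ ≤ i ⟨n + 1, hn⟩ := hgap ⟨n, hn'⟩ hn
    · obtain rfl : l = ⟨n, hn'⟩ := Fin.ext heq
      exact hgap _ hn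

section Probability

variable [IsProbabilityMeasure μ]

lemma cov_eq_integral_mul_condExp_sub {𝓐 : MeasurableSpace Ω} (h𝓐 : 𝓐 ≤ mΩ) {X Y : Ω → ℝ}
    (hX : StronglyMeasurable[𝓐] X) (hX1 : ∀ ω, |X ω| ≤ 1) (hY : Integrable Y μ) :
    cov μ X Y = ∫ ω, X ω * (μ[Y|𝓐] ω - ∫ ω', Y ω' ∂μ) ∂μ := by
  have hXbd : ∀ᵐ ω ∂μ, ‖X ω‖ ≤ 1 := .of_forall hX1
  have hXint : Integrable X μ := .of_bound (hX.mono h𝓐).aestronglyMeasurable 1 hXbd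
  have hpull : ∫ ω, X ω * Y ω ∂μ = ∫ ω, X ω * μ[Y|𝓐] ω ∂μ := by
    rw [← integral_condExp h𝓐]
    exact integral_congr_ae (condExp_stronglyMeasurable_mul_of_bound h𝓐 hX hY 1 hXbd)
  simp only [mul_sub]
  rw [integral_sub (integrable_condExp.bdd_mul (hX.mono h𝓐).aestronglyMeasurable hXbd)
    (hXint.mul_const _), integral_mul_const, cov, hpull]

lemma exists_abs_cov_le_two_mul_cov_indicator {𝓐 : MeasurableSpace Ω} (h𝓐 : 𝓐 ≤ mΩ)
    {X Y : Ω → ℝ} (hX : StronglyMeasurable[𝓐] X) (hX1 : ∀ ω, |X ω| ≤ 1) (hY : Integrable Y μ) :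
    ∃ A, MeasurableSet[𝓐] A ∧ |cov μ X Y| ≤ 2 * cov μ (A.indicator 1) Y := by
  set h : Ω → ℝ := fun ω => μ[Y|𝓐] ω - ∫ ω', Y ω' ∂μ
  set A := {ω | 0 ≤ h ω}
  have hA : MeasurableSet[𝓐] A :=
    measurableSet_le measurable_const (stronglyMeasurable_condExp.measurable.sub_const _)
  have hint : Integrable h μ := integrable_condExp.sub (integrable_const _)
  have hind1 : ∀ ω, |A.indicator (1 : Ω → ℝ) ω| ≤ 1 := fun ω => by
    by_cases hω : ω ∈ A <;> simp [hω]
  have hAint : Integrable (fun ω => A.indicator 1 ω * h ω) μ :=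
    hint.bdd_mul ((stronglyMeasurable_one.indicator hA).mono h𝓐).aestronglyMeasurable
      (.of_forall hind1)
  have hmean : ∫ ω, h ω ∂μ = 0 := by
    rw [integral_sub integrable_condExp (integrable_const _), integral_condExp h𝓐]; simp
  refine ⟨A, hA, ?_⟩
  rw [cov_eq_integral_mul_condExp_sub h𝓐 hX hX1 hY, cov_eq_integral_mul_condExp_sub h𝓐
    (stronglyMeasurable_one.indicator hA) hind1 hY]
  calc |∫ ω, X ω * h ω ∂μ| ≤ ∫ ω, |h ω| ∂μ := by
        refine abs_integral_le_integral_abs.trans (integral_mono_of_nonneg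
          (.of_forall fun ω => abs_nonneg _) hint.abs (.of_forall fun ω => ?_))
        simp only [abs_mul]
        exact mul_le_of_le_one_left (abs_nonneg _) (hX1 ω)
    _ = ∫ ω, (2 * (A.indicator 1 ω * h ω) - h ω) ∂μ := by
        refine integral_congr_ae (.of_forall fun ω => ?_)
        by_cases hω : 0 ≤ h ω
        · simp only [hω, abs_of_nonneg, Set.mem_ofPred_eq, Set.indicator_of_mem, Pi.one_apply,
            one_mul, A]
          ring
        · simp [A, hω, abs_of_neg (not_le.1 hω)]
    _ = 2 * ∫ ω, A.indicator 1 ω * h ω ∂μ := by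
        rw [integral_sub (hAint.const_mul 2) hint, integral_const_mul, hmean, sub_zero]

lemma abs_cov_le_four_mul {𝓐 𝓑 : MeasurableSpace Ω} (h𝓐 : 𝓐 ≤ mΩ) (h𝓑 : 𝓑 ≤ mΩ) {α : ℝ}
    (hα : AlphaMixingLE μ 𝓐 𝓑 α) {X Y : Ω → ℝ} (hX : Measurable[𝓐] X) (hX1 : ∀ ω, |X ω| ≤ 1)
    (hY : Measurable[𝓑] Y) (hY1 : ∀ ω, |Y ω| ≤ 1) :
    |cov μ X Y| ≤ 4 * α := by
  have hYint : Integrable Y μ :=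
    .of_bound (hY.mono h𝓑 le_rfl).aestronglyMeasurable 1 (.of_forall hY1)
  obtain ⟨A, hA, hXA⟩ :=
    exists_abs_cov_le_two_mul_cov_indicator h𝓐 hX.stronglyMeasurable hX1 hYint
  have hAint : Integrable (A.indicator (1 : Ω → ℝ)) μ :=
    (integrable_const 1).indicator (h𝓐 _ hA)
  obtain ⟨B, hB, hYB⟩ :=
    exists_abs_cov_le_two_mul_cov_indicator h𝓑 hY.stronglyMeasurable hY1 hAint
  calc |cov μ X Y| ≤ 2 * cov μ (A.indicator 1) Y := hXA
    _ ≤ 2 * |cov μ Y (A.indicator 1)| := by rw [cov_comm]; gcongr; exact le_abs_self _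
    _ ≤ 2 * (2 * cov μ (B.indicator 1) (A.indicator 1)) := by gcongr
    _ ≤ 4 * α := by
        rw [cov_indicator_one (h𝓑 _ hB) (h𝓐 _ hA), Set.inter_comm, mul_comm (μ.real B)]
        linarith [le_abs_self (μ.real (A ∩ B) - μ.real A * μ.real B), hα A B hA hB]

open Complex in
lemma norm_cov_le_sixteen_mul {𝓐 𝓑 : MeasurableSpace Ω} (h𝓐 : 𝓐 ≤ mΩ) (h𝓑 : 𝓑 ≤ mΩ) {α : ℝ}
    (hα : AlphaMixingLE μ 𝓐 𝓑 α) {Z W : Ω → ℂ} (hZ : Measurable[𝓐] Z) (hZ1 : ∀ ω, ‖Z ω‖ ≤ 1)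
    (hW : Measurable[𝓑] W) (hW1 : ∀ ω, ‖W ω‖ ≤ 1) :
    ‖cov μ Z W‖ ≤ 16 * α := by
  have hZ' : MemLp Z ∞ μ :=
    memLp_top_of_bound (hZ.mono h𝓐 le_rfl).aestronglyMeasurable 1 (.of_forall hZ1)
  have hW' : MemLp W ∞ μ :=
    memLp_top_of_bound (hW.mono h𝓑 le_rfl).aestronglyMeasurable 1 (.of_forall hW1)
  have h4 : ∀ {f g : ℂ → ℝ}, Measurable f → Measurable g → (∀ z, |f z| ≤ ‖z‖) →
      (∀ z, |g z| ≤ ‖z‖) → |cov μ (fun ω => f (Z ω)) (fun ω => g (W ω))| ≤ 4 * α :=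
    fun hf hg hf1 hg1 => abs_cov_le_four_mul h𝓐 h𝓑 hα (hf.comp hZ)
      (fun ω => (hf1 _).trans (hZ1 ω)) (hg.comp hW) (fun ω => (hg1 _).trans (hW1 ω))
  have hrr := h4 measurable_re measurable_re abs_re_le_norm abs_re_le_norm
  have hii := h4 measurable_im measurable_im abs_im_le_norm abs_im_le_norm
  have hri := h4 measurable_re measurable_im abs_re_le_norm abs_im_le_norm
  have hir := h4 measurable_im measurable_re abs_im_le_norm abs_re_le_norm
  calc ‖cov μ Z W‖ ≤ |(cov μ Z W).re| + |(cov μ Z W).im| := Complex.norm_le_abs_re_add_abs_im _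
    _ ≤ 16 * α := by
        rw [re_cov hZ' hW', im_cov hZ' hW']
        linarith [abs_sub (cov μ (fun ω => (Z ω).re) fun ω => (W ω).re)
          (cov μ (fun ω => (Z ω).im) fun ω => (W ω).im),
          abs_add_le (cov μ (fun ω => (Z ω).re) fun ω => (W ω).im)
          (cov μ (fun ω => (Z ω).im) fun ω => (W ω).re)]

theorem norm_integral_prod_sub_prod_integral_le {m : ℕ}
    {𝓐 𝓑 : Fin (m + 1) → MeasurableSpace Ω} (h𝓐 : ∀ l, 𝓐 l ≤ mΩ) (h𝓑 : ∀ l, 𝓑 l ≤ mΩ) {α : ℝ}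
    (hα : ∀ l, AlphaMixingLE μ (𝓐 l) (𝓑 l) α)
    {Z : Fin (m + 1) → Ω → ℂ} (hZ𝓐 : ∀ l, Measurable[𝓐 l] (Z l))
    (hZ𝓑 : ∀ l l', l < l' → Measurable[𝓑 l] (Z l')) (hZ1 : ∀ l ω, ‖Z l ω‖ ≤ 1) :
    ‖(∫ ω, ∏ l, Z l ω ∂μ) - ∏ l, ∫ ω, Z l ω ∂μ‖ ≤ 16 * m * α := by
  induction m with
  | zero => simp
  | succ m ih =>
    set W : Ω → ℂ := fun ω => ∏ l : Fin (m + 1), Z l.succ ω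
    have hW : Measurable[𝓑 0] W :=
      Finset.measurable_prod _ fun l _ => hZ𝓑 0 l.succ (Fin.succ_pos l)
    have head : ‖cov μ (Z 0) W‖ ≤ 16 * α :=
      norm_cov_le_sixteen_mul (h𝓐 0) (h𝓑 0) (hα 0) (hZ𝓐 0) (hZ1 0) hW
        fun ω => norm_prod_le_one _ fun l => hZ1 l.succ ω
    have tail : ‖(∫ ω, W ω ∂μ) - ∏ l : Fin (m + 1), ∫ ω, Z l.succ ω ∂μ‖ ≤ 16 * m * α :=
      ih (fun l => h𝓐 l.succ) (fun l => h𝓑 l.succ) (fun l => hα l.succ) (fun l => hZ𝓐 l.succ)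
        (fun l l' h => hZ𝓑 l.succ l'.succ (Fin.succ_lt_succ_iff.2 h)) (fun l => hZ1 l.succ)
    have hZ0 : ‖∫ ω, Z 0 ω ∂μ‖ ≤ 1 := by
      simpa using norm_integral_le_of_norm_le_const (μ := μ) (.of_forall (hZ1 0))
    calc ‖(∫ ω, ∏ l, Z l ω ∂μ) - ∏ l, ∫ ω, Z l ω ∂μ‖
        = ‖cov μ (Z 0) W + (∫ ω, Z 0 ω ∂μ) *
            ((∫ ω, W ω ∂μ) - ∏ l : Fin (m + 1), ∫ ω, Z l.succ ω ∂μ)‖ := by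
          simp only [Fin.prod_univ_succ, cov, W]; ring_nf
      _ ≤ 16 * α + 16 * m * α := by
          refine (norm_add_le _ _).trans (add_le_add head ?_)
          rw [norm_mul]
          exact (mul_le_of_le_one_left (norm_nonneg _) hZ0).trans tail
      _ = 16 * ↑(m + 1) * α := by push_cast; ring

end Probability

end VolkonskiiRozanov

theorem stmt4_general {Ω : Type*} [MeasurableSpace Ω] (μ : Measure Ω) [IsProbabilityMeasure μ]
    (F : ℕ → ℕ → MeasurableSpace Ω) (hF : ∀ a b, F a b ≤ ‹MeasurableSpace Ω›)
    (hFmono : ∀ a b a' b', a' ≤ a → b ≤ b' → F a b ≤ F a' b')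
    (a : ℕ → ℝ)
    (hmix : ∀ k l, 1 ≤ k → ∀ A B : Set Ω, MeasurableSet[F 1 l] A →
      MeasurableSet[⨆ m', F (l + k) m'] B →
      |(μ (A ∩ B)).toReal - (μ A).toReal * (μ B).toReal| ≤ a k)
    (m k : ℕ) (hm : 1 ≤ m) (hk : 1 ≤ k)
    (i j : Fin m → ℕ)
    (hij : ∀ l : Fin m, 1 ≤ i l ∧ i l < j l)
    (hgap : ∀ l : Fin m, ∀ h : l.val + 1 < m, j l + k ≤ i ⟨l.val + 1, h⟩)
    (Z : Fin m → Ω → ℂ)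
    (hZmeas : ∀ l, Measurable[F (i l) (j l)] (Z l))
    (hZbd : ∀ l ω, ‖Z l ω‖ ≤ 1) :
    ‖(∫ ω, ∏ l, Z l ω ∂μ) - ∏ l, ∫ ω, Z l ω ∂μ‖
      ≤ 16 * ((m : ℝ) - 1) * a k := by
  obtain ⟨m, rfl⟩ : ∃ m', m = m' + 1 := ⟨m - 1, by omega⟩
  have hpast : ∀ l, Measurable[F 1 (j l)] (Z l) :=
    fun l => (hZmeas l).mono (hFmono _ _ _ _ (hij l).1 le_rfl) le_rfl
  have hfuture : ∀ l l', l < l' → Measurable[⨆ b, F (j l + k) b] (Z l') := by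
    intro l l' hll'
    have hle := VolkonskiiRozanov.end_add_le_start_of_lt (fun l => (hij l).2) hgap hll'
    exact (hZmeas l').mono ((hFmono _ _ _ _ hle le_rfl).trans (le_iSup _ (j l'))) le_rfl
  have hα : ∀ l, VolkonskiiRozanov.AlphaMixingLE μ (F 1 (j l)) (⨆ b, F (j l + k) b) (a k) :=
    fun l => hmix k (j l) hk
  convert VolkonskiiRozanov.norm_integral_prod_sub_prod_integral_le (fun l => hF 1 (j l))
    (fun l => iSup_le fun b => hF (j l + k) b) hα hpast hfuture hZbd using 2
  push_cast
  ring

/-- Volkonskii–Rozanov lemma: if `Z₁,…,Z_m` are complex random variables with `|Z_j| ≤ 1`,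
`Z_j` measurable w.r.t. `F(i_j, j_j)` with interleaved index blocks separated by gaps `≥ k`
in an α-mixing process with mixing bound `a(k)`, then
`|E ∏ Z_j − ∏ E Z_j| ≤ 16 (m−1) a(k)`. -/
theorem stmt4 {Ω : Type*} [MeasurableSpace Ω] (μ : Measure Ω) [IsProbabilityMeasure μ]
    (F : ℕ → ℕ → MeasurableSpace Ω) (hF : ∀ a b, F a b ≤ ‹MeasurableSpace Ω›)
    (hFmono : ∀ a b a' b', a' ≤ a → b ≤ b' → F a b ≤ F a' b')
    (a : ℕ → ℝ)
    (hmix : ∀ k l, 1 ≤ k → ∀ A B : Set Ω, MeasurableSet[F 1 l] A →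
      MeasurableSet[⨆ m', F (l + k) m'] B →
      |(μ (A ∩ B)).toReal - (μ A).toReal * (μ B).toReal| ≤ a k)
    (m n k : ℕ) (hm : 1 ≤ m) (hk : 1 ≤ k)
    (i j : Fin m → ℕ)
    (hij : ∀ l : Fin m, 1 ≤ i l ∧ i l < j l)
    (hgap : ∀ l : Fin m, ∀ h : l.val + 1 < m, j l + k ≤ i ⟨l.val + 1, h⟩)
    (hjn : ∀ l : Fin m, j l ≤ n)
    (Z : Fin m → Ω → ℂ)
    (hZmeas : ∀ l, Measurable[F (i l) (j l)] (Z l))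
    (hZbd : ∀ l ω, ‖Z l ω‖ ≤ 1) :
    ‖(∫ ω, ∏ l, Z l ω ∂μ) - ∏ l, ∫ ω, Z l ω ∂μ‖
      ≤ 16 * ((m : ℝ) - 1) * a k :=
  stmt4_general μ F hF hFmono a hmix m k hm hk i j hij hgap Z hZmeas hZbd
end

section
/- Suppose α(k) = O(k^{−λ}) with λ > 3, and for each lag k the covariance satisfies both |c_k| ≤ C₁ h² and |c_k| ≤ C₂ α(k)^{1−1/λ} h^{1/λ}, with h = h_n → 0. Then h^{−1}∑_{k=1}^{n−1} |c_k| → 0 as n → ∞. -/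
open Filter Topology

/-- Abstract summation lemma: if `α(k) = O(k^{−λ})` with `λ > 3` and the covariances
satisfy both `|c_{n,k}| ≤ C₁ h_n²` and `|c_{n,k}| ≤ C₂ α(k)^{1−1/λ} h_n^{1/λ}` with
`h_n → 0⁺`, then `h_n^{−1} ∑_{k=1}^{n−1} |c_{n,k}| → 0`. -/
theorem stmt15 (lam : ℝ) (hlam : 3 < lam)
    (α : ℕ → ℝ) (hαnn : ∀ k, 0 ≤ α k)
    (Cα : ℝ) (hα : ∀ k : ℕ, 1 ≤ k → α k ≤ Cα * (k : ℝ) ^ (-lam))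
    (h : ℕ → ℝ) (hhpos : ∀ n, 0 < h n) (hh0 : Tendsto h atTop (nhds 0))
    (c : ℕ → ℕ → ℝ) (C₁ C₂ : ℝ)
    (hc1 : ∀ n k, |c n k| ≤ C₁ * (h n)^2)
    (hc2 : ∀ n k, |c n k| ≤ C₂ * (α k) ^ (1 - 1/lam) * (h n) ^ ((1:ℝ)/lam)) :
    Tendsto (fun n : ℕ => (h n)⁻¹ * ∑ k ∈ Finset.Icc 1 (n - 1), |c n k|)
      atTop (nhds 0) := by
  have hlam0 : (0:ℝ) < lam := by linarith
  have hCα : 0 ≤ Cα := by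
    have h1 := (hαnn 1).trans (hα 1 le_rfl)
    simpa using h1
  -- choose interpolation exponent a
  set a : ℝ := ((lam-1)/(2*lam-1) + (lam-2)/(lam-1))/2 with ha_def
  have hkey : (lam-1)/(2*lam-1) < (lam-2)/(lam-1) := by
    rw [div_lt_div_iff₀ (by linarith) (by linarith)]
    nlinarith
  have ha1 : (lam-1)/(2*lam-1) < a := by rw [ha_def]; linarith
  have ha2 : a < (lam-2)/(lam-1) := by rw [ha_def]; linarith
  have ha_pos : 0 < a := lt_trans (div_pos (by linarith) (by linarith)) ha1
  have ha_lt1 : a < 1 := lt_trans ha2 (by rw [div_lt_one (by linarith)]; linarith)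
  -- derived exponents
  set e : ℝ := (1 - 1/lam) * (1 - a) with he_def
  set p : ℝ := lam * e with hp_def
  have hp1 : 1 < p := by
    have h2 : a * (lam - 1) < lam - 2 := by
      rw [div_lt_div_iff₀ (by linarith) (by linarith)] at hkey
      have := (lt_div_iff₀ (by linarith : (0:ℝ) < lam - 1)).mp ha2
      linarith
    have h3 : p = (lam - 1) * (1 - a) := by
      rw [hp_def, he_def]; field_simp
    rw [h3]; nlinarith
  have he_pos : 0 < e := by
    rw [he_def]
    have : 0 < 1 - 1/lam := by
      rw [sub_pos, div_lt_one hlam0]; linarith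
    nlinarith
  set ε : ℝ := 2*a + (1-a)/lam - 1 with hε_def
  have hε_pos : 0 < ε := by
    have h2 : lam - 1 < a * (2*lam - 1) := by
      have := (div_lt_iff₀ (by linarith : (0:ℝ) < 2*lam - 1)).mp ha1
      linarith
    have h3 : ε * lam = a*(2*lam-1) - (lam-1) := by
      rw [hε_def]; field_simp; ring
    nlinarith [h3]
  -- constants
  set D₁ : ℝ := |C₁| with hD1
  set D₂ : ℝ := |C₂| with hD2
  have hsum : Summable (fun k : ℕ => (k:ℝ) ^ (-p)) := by
    rw [Real.summable_nat_rpow]; linarith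
  set T : ℝ := ∑' k : ℕ, (k:ℝ) ^ (-p) with hT
  set M : ℝ := D₁ ^ a * D₂ ^ (1-a) * Cα ^ e * T with hM
  -- pointwise bound
  have key : ∀ n k : ℕ, 1 ≤ k →
      |c n k| ≤ D₁ ^ a * D₂ ^ (1-a) * Cα ^ e * (h n ^ ((1:ℝ)+ε)) * (k:ℝ) ^ (-p) := by
    intro n k hk
    have hh := (hhpos n).le
    have hαk := hαnn k
    have hc1' : |c n k| ≤ D₁ * h n ^ 2 :=
      (hc1 n k).trans (mul_le_mul_of_nonneg_right (le_abs_self _) (sq_nonneg _))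
    have hc2' : |c n k| ≤ D₂ * (α k) ^ (1 - 1/lam) * (h n) ^ ((1:ℝ)/lam) := by
      refine (hc2 n k).trans ?_
      have : C₂ * (α k) ^ (1 - 1/lam) ≤ D₂ * (α k) ^ (1 - 1/lam) :=
        mul_le_mul_of_nonneg_right (le_abs_self _) (Real.rpow_nonneg hαk _)
      exact mul_le_mul_of_nonneg_right this (Real.rpow_nonneg hh _)
    have hA : (0:ℝ) ≤ D₁ * h n ^ 2 := (abs_nonneg _).trans hc1'
    have hB : (0:ℝ) ≤ D₂ * (α k) ^ (1 - 1/lam) * (h n) ^ ((1:ℝ)/lam) :=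
      (abs_nonneg _).trans hc2'
    have step1 : |c n k| ≤ (D₁ * h n ^ 2) ^ a *
        (D₂ * (α k) ^ (1 - 1/lam) * (h n) ^ ((1:ℝ)/lam)) ^ (1-a) := by
      have : |c n k| = |c n k| ^ a * |c n k| ^ (1-a) := by
        rw [← Real.rpow_add_of_nonneg (abs_nonneg _) ha_pos.le (by linarith)]
        simp
      rw [this]
      exact mul_le_mul (Real.rpow_le_rpow (abs_nonneg _) hc1' ha_pos.le)
        (Real.rpow_le_rpow (abs_nonneg _) hc2' (by linarith))
        (Real.rpow_nonneg (abs_nonneg _) _) (Real.rpow_nonneg hA _)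
    refine step1.trans ?_
    have hD1nn : (0:ℝ) ≤ D₁ := abs_nonneg _
    have hD2nn : (0:ℝ) ≤ D₂ := abs_nonneg _
    -- expand
    have expandA : (D₁ * h n ^ 2) ^ a = D₁ ^ a * h n ^ (2*a) := by
      rw [Real.mul_rpow hD1nn (sq_nonneg _)]
      congr 1
      rw [← Real.rpow_natCast (h n) 2, ← Real.rpow_mul hh]
      norm_num
    have expandB : (D₂ * (α k) ^ (1 - 1/lam) * (h n) ^ ((1:ℝ)/lam)) ^ (1-a)
        = D₂ ^ (1-a) * (α k) ^ e * h n ^ ((1-a)/lam) := by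
      rw [Real.mul_rpow (mul_nonneg hD2nn (Real.rpow_nonneg hαk _)) (Real.rpow_nonneg hh _),
        Real.mul_rpow hD2nn (Real.rpow_nonneg hαk _),
        ← Real.rpow_mul hαk, ← Real.rpow_mul hh, he_def]
      ring_nf
    rw [expandA, expandB]
    have hαbound : (α k) ^ e ≤ Cα ^ e * (k:ℝ) ^ (-p) := by
      have hkpos : (0:ℝ) < (k:ℝ) := by exact_mod_cast hk
      calc (α k) ^ e ≤ (Cα * (k:ℝ) ^ (-lam)) ^ e :=
            Real.rpow_le_rpow hαk (hα k hk) he_pos.le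
        _ = Cα ^ e * (k:ℝ) ^ (-p) := by
            rw [Real.mul_rpow hCα (Real.rpow_nonneg hkpos.le _),
              ← Real.rpow_mul hkpos.le, hp_def]
            ring_nf
    have hpow : h n ^ (2*a) * h n ^ ((1-a)/lam) = h n ^ ((1:ℝ)+ε) := by
      rw [← Real.rpow_add (hhpos n), hε_def]
      ring_nf
    calc D₁ ^ a * h n ^ (2*a) * (D₂ ^ (1-a) * (α k) ^ e * h n ^ ((1-a)/lam))
        = D₁ ^ a * D₂ ^ (1-a) * (h n ^ (2*a) * h n ^ ((1-a)/lam)) * (α k) ^ e := by ring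
      _ ≤ D₁ ^ a * D₂ ^ (1-a) * (h n ^ (2*a) * h n ^ ((1-a)/lam)) * (Cα ^ e * (k:ℝ) ^ (-p)) := by
          apply mul_le_mul_of_nonneg_left hαbound
          positivity
      _ = D₁ ^ a * D₂ ^ (1-a) * Cα ^ e * (h n ^ ((1:ℝ)+ε)) * (k:ℝ) ^ (-p) := by
          rw [hpow]; ring
  -- bound on the whole expression
  have hMnn : 0 ≤ M := by
    have hTnn : 0 ≤ T := tsum_nonneg fun k => Real.rpow_nonneg (Nat.cast_nonneg k) _
    rw [hM]; positivity
  have bound : ∀ n : ℕ, (h n)⁻¹ * ∑ k ∈ Finset.Icc 1 (n - 1), |c n k| ≤ M * h n ^ ε := by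
    intro n
    have hh := hhpos n
    have hsumbound : ∑ k ∈ Finset.Icc 1 (n - 1), |c n k|
        ≤ D₁ ^ a * D₂ ^ (1-a) * Cα ^ e * (h n ^ ((1:ℝ)+ε)) *
            ∑ k ∈ Finset.Icc 1 (n - 1), (k:ℝ) ^ (-p) := by
      rw [Finset.mul_sum]
      apply Finset.sum_le_sum
      intro k hk
      exact key n k (Finset.mem_Icc.mp hk).1
    have hsumT : ∑ k ∈ Finset.Icc 1 (n - 1), (k:ℝ) ^ (-p) ≤ T :=
      Summable.sum_le_tsum _ (fun k _ => Real.rpow_nonneg (Nat.cast_nonneg k) _) hsum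
    have hcoef : (0:ℝ) ≤ D₁ ^ a * D₂ ^ (1-a) * Cα ^ e * (h n ^ ((1:ℝ)+ε)) := by positivity
    have : (h n)⁻¹ * ∑ k ∈ Finset.Icc 1 (n - 1), |c n k|
        ≤ (h n)⁻¹ * (D₁ ^ a * D₂ ^ (1-a) * Cα ^ e * (h n ^ ((1:ℝ)+ε)) * T) := by
      apply mul_le_mul_of_nonneg_left _ (inv_nonneg.mpr hh.le)
      exact hsumbound.trans (mul_le_mul_of_nonneg_left hsumT hcoef)
    refine this.trans_eq ?_
    have hsplit : h n ^ ((1:ℝ)+ε) = h n * h n ^ ε := by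
      rw [Real.rpow_add hh, Real.rpow_one]
    rw [hsplit, hM]
    field_simp
  have nonneg : ∀ n : ℕ, 0 ≤ (h n)⁻¹ * ∑ k ∈ Finset.Icc 1 (n - 1), |c n k| := by
    intro n
    exact mul_nonneg (inv_nonneg.mpr (hhpos n).le)
      (Finset.sum_nonneg fun k _ => abs_nonneg _)
  have hlim : Tendsto (fun n => M * h n ^ ε) atTop (nhds 0) := by
    have : Tendsto (fun n => h n ^ ε) atTop (nhds ((0:ℝ) ^ ε)) :=
      hh0.rpow_const (Or.inr hε_pos.le)
    rw [Real.zero_rpow hε_pos.ne'] at this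
    simpa using this.const_mul M
  exact squeeze_zero nonneg bound hlim
end
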